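/- arXiv:2104.06932 — 3 statements merged into one kernel-verified Lean document; each statement's English description precedes it below -/
import Mathlib

section
/- Define the iterated exponential 2^x_n by 2^x_0 = x and 2^x_{n+1} = 2^{(2^x_n)}. Let k ≥ 2 and define t_k(0) = 0, t_k(n+1) = k^{≤ t_k(n)+1} + t_k(n) + 1 where k^{≤m} = ∑_{i=0}^m k^i. Then for all n ≥ 1, t_k(n) ≤ 2^{c_k}_{n-1}, where c_k = (k+3)·log₂ k + log₂ log₂ k + 2. -/
open Real

/-- The iterated exponential `2^x_n`: a tower of `n` twos topped by `x`. -/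
noncomputable def tower (x : ℝ) : ℕ → ℝ
  | 0 => x
  | n + 1 => (2 : ℝ) ^ tower x n

/-- `t_k(0) = 0`, `t_k(n+1) = k^{≤ t_k(n)+1} + t_k(n) + 1`,
where `k^{≤ m} = ∑_{i=0}^m k^i`. -/
def tk (k : ℕ) : ℕ → ℕ
  | 0 => 0
  | n + 1 => (∑ i ∈ Finset.range (tk k n + 2), k ^ i) + tk k n + 1

/-!
Write `L = log₂ k`. The exponent `e(n) = L (t_k(n+1) + 1) + log₂ L + 2` (`tkExponent k n`),
which is `log₂ (4 L k^{t_k(n+1)+1})`, dominates `t_k(n+1)` and equals `c_k` at `n = 0`, since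
`t_k(1) = k + 2`. The geometric sum gives `t_k(n+2) + 1 ≤ 3 k^{t_k(n+1)+1}`, hence, using
`log₂ L ≤ L`, `e(n+1) ≤ 3 L k^{t+1} + log₂ L + 2 ≤ 4 L k^{t+1} = 2^{e(n)}`, so `e` stays below
the tower.
-/

theorem le_tower_of_le_two_rpow {a : ℕ → ℝ} {x : ℝ} (h₀ : a 0 ≤ x)
    (hsucc : ∀ n, a (n + 1) ≤ 2 ^ a n) : ∀ n, a n ≤ tower x n
  | 0 => h₀
  | n + 1 => (hsucc n).trans <|
      rpow_le_rpow_of_exponent_le one_le_two (le_tower_of_le_two_rpow h₀ hsucc n)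

theorem Nat.geomSum_range_succ_le_two_mul {k : ℕ} (hk : 2 ≤ k) (m : ℕ) :
    ∑ i ∈ Finset.range (m + 1), k ^ i ≤ 2 * k ^ m := by
  have := Nat.geomSum_lt (s := Finset.range m) hk fun _ ↦ Finset.mem_range.mp
  rw [Finset.sum_range_succ]
  omega

theorem logb_two_natCast_le_self (k : ℕ) : logb 2 k ≤ k := by
  rcases k.eq_zero_or_pos with rfl | hk
  · simp
  rw [logb_le_iff_le_rpow one_lt_two (by exact_mod_cast hk), rpow_natCast]
  exact_mod_cast Nat.lt_two_pow_self.le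

theorem one_le_logb_two_natCast {k : ℕ} (hk : 2 ≤ k) : 1 ≤ logb 2 k := by
  rw [le_logb_iff_rpow_le one_lt_two (by positivity), rpow_one]
  exact_mod_cast hk

theorem logb_two_logb_two_natCast_le {k : ℕ} (hk : 2 ≤ k) :
    logb 2 (logb 2 k) ≤ logb 2 k :=
  logb_le_logb_of_le one_lt_two (by linarith [one_le_logb_two_natCast hk])
    (logb_two_natCast_le_self k)

theorem tk_one (k : ℕ) : tk k 1 = k + 2 := by
  simp only [tk, Finset.sum_range_succ, Finset.sum_range_zero]
  ring

theorem one_le_tk_succ (k n : ℕ) : 1 ≤ tk k (n + 1) := by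
  simp only [tk]
  omega

theorem tk_succ_add_one_le {k : ℕ} (hk : 2 ≤ k) (n : ℕ) :
    tk k (n + 1) + 1 ≤ 3 * k ^ (tk k n + 1) := by
  have hsum : ∑ i ∈ Finset.range (tk k n + 2), k ^ i ≤ 2 * k ^ (tk k n + 1) :=
    Nat.geomSum_range_succ_le_two_mul hk _
  have hself : tk k n + 2 ≤ 2 ^ (tk k n + 1) := Nat.lt_two_pow_self
  have hbase : 2 ^ (tk k n + 1) ≤ k ^ (tk k n + 1) := Nat.pow_le_pow_left hk _
  simp only [tk]
  omega

noncomputable def tkExponent (k n : ℕ) : ℝ :=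
  logb 2 k * (tk k (n + 1) + 1) + logb 2 (logb 2 k) + 2

theorem tkExponent_zero (k : ℕ) :
    tkExponent k 0 = (k + 3 : ℝ) * logb 2 k + logb 2 (logb 2 k) + 2 := by
  rw [tkExponent, zero_add, tk_one]
  push_cast
  ring

theorem two_rpow_tkExponent {k : ℕ} (hk : 2 ≤ k) (n : ℕ) :
    (2 : ℝ) ^ tkExponent k n = 4 * logb 2 k * k ^ (tk k (n + 1) + 1) := by
  have hL := one_le_logb_two_natCast hk
  have hk₀ : (0 : ℝ) < k := by positivity
  rw [tkExponent, rpow_add two_pos, rpow_add two_pos, rpow_mul zero_le_two,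
    rpow_logb two_pos one_lt_two.ne' hk₀, rpow_logb two_pos one_lt_two.ne' (by linarith),
    ← Nat.cast_succ, rpow_natCast]
  norm_num
  ring

theorem tkExponent_succ_le {k : ℕ} (hk : 2 ≤ k) (n : ℕ) :
    tkExponent k (n + 1) ≤ 2 ^ tkExponent k n := by
  set t := tk k (n + 1)
  have hL := one_le_logb_two_natCast hk
  have hl := logb_two_logb_two_natCast_le hk
  have hstep : ((tk k (n + 2) + 1 : ℕ) : ℝ) ≤ 3 * k ^ (t + 1) := by
    exact_mod_cast tk_succ_add_one_le hk (n + 1)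
  have hpow : (3 : ℝ) ≤ k ^ (t + 1) := by
    have : 3 ≤ k ^ (t + 1) := calc
      3 ≤ 2 ^ 2 := by norm_num
      _ ≤ k ^ 2 := Nat.pow_le_pow_left hk 2
      _ ≤ k ^ (t + 1) := Nat.pow_le_pow_right (by omega) (by linarith [one_le_tk_succ k n])
    exact_mod_cast this
  push_cast at hstep
  have hLstep := mul_le_mul_of_nonneg_left hstep (zero_le_one.trans hL)
  rw [two_rpow_tkExponent hk, tkExponent]
  calc logb 2 k * (tk k (n + 2) + 1) + logb 2 (logb 2 k) + 2
      ≤ logb 2 k * (3 * k ^ (t + 1)) + 3 * logb 2 k := by linarith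
    _ ≤ 4 * logb 2 k * k ^ (t + 1) := by nlinarith

theorem tk_succ_le_tkExponent {k : ℕ} (hk : 2 ≤ k) (n : ℕ) :
    (tk k (n + 1) : ℝ) ≤ tkExponent k n := by
  have hL := one_le_logb_two_natCast hk
  have hl : 0 ≤ logb 2 (logb 2 k) := logb_nonneg one_lt_two hL
  rw [tkExponent]
  nlinarith

/-- For `k ≥ 2` and `n ≥ 1`, `t_k(n) ≤ 2^{c_k}_{n-1}`, where
`c_k = (k+3)·log₂ k + log₂ log₂ k + 2`. -/
theorem tk_le_tower (k : ℕ) (hk : 2 ≤ k) (n : ℕ) (hn : 1 ≤ n) :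
    (tk k n : ℝ) ≤
      tower ((k + 3 : ℝ) * logb 2 k + logb 2 (logb 2 k) + 2) (n - 1) := by
  obtain ⟨m, rfl⟩ := Nat.exists_eq_add_of_le' hn
  rw [Nat.add_sub_cancel]
  exact (tk_succ_le_tkExponent hk m).trans <|
    le_tower_of_le_two_rpow (tkExponent_zero k).le (tkExponent_succ_le hk) m
end

section
/- For every k ≥ 1 and every n ≥ 1, there exists a structure A satisfying extensionality, boundedness by k (every element has at most k members), existence of the empty set and of all sets of ≤ k elements, acyclicity axioms C_i for all 1 ≤ i < n (no ∈-cycles of length i), but containing an ∈-cycle of length exactly n. Consequently, the theory S_k is not finitely axiomatizable. -/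
open FirstOrder

/-- The relation symbols of the language of set theory: a single binary symbol `∈`. -/
inductive memSym : ℕ → Type
  | mem : memSym 2

/-- The language of set theory: a single binary relation symbol `∈`. -/
def setLang : FirstOrder.Language := ⟨fun _ => Empty, memSym⟩

/-- The membership relation of a `setLang`-structure. -/
def memRel (M : Type*) [setLang.Structure M] (x y : M) : Prop :=
  FirstOrder.Language.Structure.RelMap (L := setLang) memSym.mem ![x, y]

/-- `r` makes `A` a model of the theory `S_k`: extensionality, boundedness by `k`,
existence of all sets of at most `k` elements (including the empty set), and
acyclicity of `∈` (axioms `C_n` for all `n ≥ 1`). -/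
def IsSkModel {A : Type*} (r : A → A → Prop) (k : ℕ) : Prop :=
  (∀ x y : A, (∀ t, r t x ↔ r t y) → x = y) ∧
  (∀ x : A, {t | r t x}.Finite ∧ {t | r t x}.ncard ≤ k) ∧
  (∀ s : Set A, s.Finite → s.ncard ≤ k → ∃ y : A, ∀ t, r t y ↔ t ∈ s) ∧
  (∀ x : A, ¬ Relation.TransGen r x x)

/-- An `∈`-cycle of length `n`: `x_0 ∈ x_1 ∈ … ∈ x_n = x_0`. -/
def HasCycle {A : Type*} (r : A → A → Prop) (n : ℕ) : Prop :=
  ∃ x : ℕ → A, x n = x 0 ∧ ∀ j < n, r (x j) (x (j + 1))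

/-!
The model is the completion of an `n`-cycle of atoms `a_0 ∈ a_1 ∈ ⋯ ∈ a_(n-1) ∈ a_0`, each atom
being the singleton of its predecessor, under all subsets of size `≤ k`. Sets are coded by natural
numbers through their binary digits, so a set is larger than each of its members; hence every
`∈`-cycle winds around the atoms and has length divisible by `n`, and the completion satisfies every
axiom of `S_k` except `C_n`.

If a finite `T₀` axiomatized `S_k`, compactness would derive `T₀` from the axioms of `S_k` with
only the `C_i` for `i < N`, for some `N ≥ 1`. The completion of an `N`-cycle satisfies these,
hence `T₀`, hence `S_k`, yet it contains an `N`-cycle.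
-/

universe u v

open FirstOrder.Language

theorem Set.encard_le_coe_iff_forall_not_injective {α : Type*} {s : Set α} {k : ℕ} :
    s.encard ≤ k ↔ ∀ f : Fin (k + 1) → α, (∀ i, f i ∈ s) → ¬ Function.Injective f := by
  constructor
  · intro hs f hfs hf
    have := hf.encard_range.trans ((Set.encard_le_encard (Set.range_subset_iff.2 hfs)).trans hs)
    exact (ENat.natCast_lt_natCast.2 k.lt_succ_self).not_ge (by simpa using this)
  · intro h
    by_contra! hlt
    obtain ⟨t, hts, ht⟩ := Set.exists_subset_encard_eq (Order.add_one_le_of_lt hlt)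
    have := (Set.finite_of_encard_eq_coe ht).to_subtype
    have hcard : Nat.card t = k + 1 := by
      rw [Nat.card_coe_set_eq, Set.ncard, ht]; rfl
    let e := Finite.equivFinOfCardEq hcard
    exact h (fun i => e.symm i) (fun i => hts (e.symm i).2)
      (Subtype.val_injective.comp e.symm.injective)

theorem Set.forall_finite_ncard_le_iff {α : Type*} {k : ℕ} {P : Set α → Prop} :
    (∀ s : Set α, s.Finite → s.ncard ≤ k → P s) ↔ ∀ m ≤ k, ∀ f : Fin m → α, P (Set.range f) := by
  constructor
  · intro h m hm f
    refine h _ (Set.finite_range f) (le_trans ?_ hm)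
    simpa using Set.ncard_image_le (f := f) (s := Set.univ) Set.finite_univ
  · intro h s hs hsk
    have := hs.to_subtype
    let e := Finite.equivFinOfCardEq (Nat.card_coe_set_eq s)
    have hrange : Set.range (Subtype.val ∘ e.symm) = s :=
      (e.symm.surjective.range_comp _).trans Subtype.range_coe
    exact hrange ▸ h _ hsk _

section Cycles

variable {A B : Type*} {r : A → A → Prop} {i : ℕ}

theorem HasCycle.map {s : B → B → Prop} (f : A → B) (hf : ∀ a b, r a b → s (f a) (f b)) :
    HasCycle r i → HasCycle s i
  | ⟨x, hx, hr⟩ => ⟨f ∘ x, congrArg f hx, fun j hj => hf _ _ (hr j hj)⟩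

theorem HasCycle.and_rank_eq {β : Type*} [PartialOrder β] (f : A → β)
    (hf : ∀ a b, r a b → f a ≤ f b) (h : HasCycle r i) :
    HasCycle (fun a b => r a b ∧ f a = f b) i := by
  obtain ⟨x, hx, hr⟩ := h
  have hmono : Monotone fun m => f (x (min m i)) := monotone_nat_of_le_succ fun m => by
    rcases lt_or_ge m i with hm | hm
    · simpa [min_eq_left hm.le, min_eq_left (Nat.succ_le_of_lt hm)] using hf _ _ (hr m hm)
    · simp [min_eq_right hm, min_eq_right (hm.trans m.le_succ)]
  refine ⟨x, hx, fun j hj => ⟨hr j hj, le_antisymm (hf _ _ (hr j hj)) ?_⟩⟩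
  calc f (x (j + 1)) ≤ f (x i) := by
        simpa [min_eq_left (Nat.succ_le_of_lt hj)] using hmono (Nat.succ_le_of_lt hj)
    _ = f (x 0) := by rw [hx]
    _ ≤ f (x j) := by simpa [min_eq_left hj.le] using hmono (Nat.zero_le j)

theorem hasCycle_iff_exists_fin :
    HasCycle r i ↔ ∃ xs : Fin (i + 1) → A,
      xs (Fin.last i) = xs 0 ∧ ∀ j : Fin i, r (xs j.castSucc) (xs j.succ) := by
  constructor
  · rintro ⟨x, hx, hr⟩
    exact ⟨fun j => x j, hx, fun j => hr j j.2⟩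
  · rintro ⟨xs, hxs, hr⟩
    refine ⟨fun m => xs (Fin.clamp m i), by simpa [Fin.clamp, Fin.last] using hxs, fun j hj => ?_⟩
    have hj' : j + 1 ≤ i := hj
    simpa [Fin.clamp, min_eq_left hj.le, min_eq_left hj'] using hr ⟨j, hj⟩

theorem Relation.TransGen.exists_chain {a b : A} (h : Relation.TransGen r a b) :
    ∃ m, 1 ≤ m ∧ ∃ x : ℕ → A, x 0 = a ∧ x m = b ∧ ∀ j < m, r (x j) (x (j + 1)) := by
  induction h with
  | @single c hac =>
    refine ⟨1, le_rfl, Function.update (fun _ => a) 1 c, by simp, by simp, fun j hj => ?_⟩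
    obtain rfl : j = 0 := by omega
    simpa using hac
  | @tail c d _ hcd ih =>
    obtain ⟨m, hm, x, hx0, hxm, hr⟩ := ih
    refine ⟨m + 1, by omega, Function.update x (m + 1) d, by simp [hx0], by simp, fun j hj => ?_⟩
    rcases Nat.lt_succ_iff_lt_or_eq.1 hj with hj | rfl
    · simpa [Function.update_of_ne (show j ≠ m + 1 by omega),
        Function.update_of_ne (show j + 1 ≠ m + 1 by omega)] using hr j hj
    · simpa [hxm] using hcd

theorem Relation.TransGen.of_chain {x : ℕ → A} {m : ℕ} (hm : 1 ≤ m)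
    (h : ∀ j < m, r (x j) (x (j + 1))) :
    Relation.TransGen r (x 0) (x m) := by
  induction m, hm using Nat.le_induction with
  | base => exact .single (h 0 one_pos)
  | succ m _ ih => exact (ih fun j hj => h j (by omega)).tail (h m (by omega))

theorem forall_not_hasCycle_iff :
    (∀ i, 1 ≤ i → ¬ HasCycle r i) ↔ ∀ x, ¬ Relation.TransGen r x x := by
  constructor
  · intro h a ha
    obtain ⟨m, hm, x, hx0, hxm, hr⟩ := ha.exists_chain
    exact h m hm ⟨x, hxm.trans hx0.symm, hr⟩
  · rintro h i hi ⟨x, hx, hr⟩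
    exact h (x 0) (hx ▸ .of_chain hi hr)

end Cycles

def IsSkModelBelow {A : Type*} (r : A → A → Prop) (k N : ℕ) : Prop :=
  (∀ x y : A, (∀ t, r t x ↔ r t y) → x = y) ∧
  (∀ x : A, {t | r t x}.Finite ∧ {t | r t x}.ncard ≤ k) ∧
  (∀ s : Set A, s.Finite → s.ncard ≤ k → ∃ y : A, ∀ t, r t y ↔ t ∈ s) ∧
  (∀ i : ℕ, 1 ≤ i → i < N → ¬ HasCycle r i)

theorem isSkModel_iff_forall_isSkModelBelow {A : Type*} {r : A → A → Prop} {k : ℕ} :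
    IsSkModel r k ↔ ∀ N, IsSkModelBelow r k N := by
  rw [IsSkModel, ← forall_not_hasCycle_iff]
  exact ⟨fun ⟨hext, hbdd, hv, hcyc⟩ _ => ⟨hext, hbdd, hv, fun i hi _ => hcyc i hi⟩,
    fun h => ⟨(h 0).1, (h 0).2.1, (h 0).2.2.1, fun i hi => (h (i + 1)).2.2.2 i hi i.lt_succ_self⟩⟩

namespace CycleCompletion

variable {k n : ℕ}

def atomPred (n x : ℕ) : ℕ := (x + (n - 1)) % n

theorem atomPred_lt (hn : 0 < n) (x : ℕ) : atomPred n x < n := Nat.mod_lt _ hn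

theorem atomPred_succ_mod {p : ℕ} (hp : p < n) : atomPred n ((p + 1) % n) = p := by
  rw [atomPred, Nat.mod_add_mod, show p + 1 + (n - 1) = p + n by omega, Nat.add_mod_right,
    Nat.mod_eq_of_lt hp]

theorem atomPred_add_one_modEq (hn : 0 < n) (x : ℕ) : atomPred n x + 1 ≡ x [MOD n] := by
  rw [Nat.ModEq, atomPred, Nat.mod_add_mod, show x + (n - 1) + 1 = x + n by omega,
    Nat.add_mod_right]

theorem atomPred_injOn (hn : 0 < n) {x y : ℕ} (hx : x < n) (hy : y < n)
    (h : atomPred n x = atomPred n y) : x = y := by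
  have := ((atomPred_add_one_modEq hn x).symm.trans (h ▸ atomPred_add_one_modEq hn y))
  rwa [Nat.ModEq, Nat.mod_eq_of_lt hx, Nat.mod_eq_of_lt hy] at this

/-- Codes `x < n` are the atoms `a_x` of the cycle, with `a_x = {a_(x-1 mod n)}`; a code
`x ≥ n` stands for the set of the codes whose bits are set in `x - n`. -/
def members (n x : ℕ) : Finset ℕ :=
  if x < n then {atomPred n x} else Finset.equivBitIndices (x - n)

theorem members_of_lt {x : ℕ} (hx : x < n) : members n x = {atomPred n x} := if_pos hx

theorem members_of_le {x : ℕ} (hx : n ≤ x) : members n x = Finset.equivBitIndices (x - n) :=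
  if_neg (Nat.not_lt.2 hx)

theorem dvd_of_hasCycle_atomPred (hn : 0 < n) {i : ℕ}
    (h : HasCycle (fun t x => t = atomPred n x) i) : n ∣ i := by
  obtain ⟨x, hx, hr⟩ := h
  have key : ∀ j ≤ i, x 0 + j ≡ x j [MOD n] := by
    intro j
    induction j with
    | zero => exact fun _ => rfl
    | succ j ih =>
      intro hj
      calc x 0 + (j + 1) = (x 0 + j) + 1 := rfl
        _ ≡ x j + 1 [MOD n] := (ih (by omega)).add_right 1
        _ = atomPred n (x (j + 1)) + 1 := by rw [hr j (by omega)]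
        _ ≡ x (j + 1) [MOD n] := atomPred_add_one_modEq hn _
  have hi : x 0 + i ≡ x 0 + 0 [MOD n] := by simpa [hx] using key i le_rfl
  exact Nat.modEq_zero_iff_dvd.1 (Nat.ModEq.add_left_cancel' _ hi)

def rank (n x : ℕ) : ℕ := if x < n then 0 else x

theorem rank_lt_of_mem_of_le {t x : ℕ} (hx : n ≤ x) (h : t ∈ members n x) :
    rank n t < rank n x := by
  rw [members_of_le hx] at h
  have : t < x - n :=
    Nat.lt_two_pow_self.trans_le (Nat.two_pow_le_of_mem_bitIndices (by simpa using h))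
  simp only [rank, Nat.not_lt.2 hx, if_false]
  split <;> omega

theorem rank_le_of_mem (hn : 0 < n) {t x : ℕ} (h : t ∈ members n x) : rank n t ≤ rank n x := by
  by_cases hx : x < n
  · rw [members_of_lt hx, Finset.mem_singleton] at h
    simp [rank, h, atomPred_lt hn]
  · exact (rank_lt_of_mem_of_le (Nat.not_lt.1 hx) h).le

theorem eq_atomPred_of_mem_of_rank_eq {t x : ℕ} (h : t ∈ members n x)
    (hr : rank n t = rank n x) : t = atomPred n x := by
  by_cases hx : x < n
  · rwa [members_of_lt hx, Finset.mem_singleton] at h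
  · exact absurd hr (rank_lt_of_mem_of_le (Nat.not_lt.1 hx) h).ne

theorem dvd_of_hasCycle_members (hn : 0 < n) {i : ℕ} (h : HasCycle (fun t x => t ∈ members n x) i) :
    n ∣ i :=
  dvd_of_hasCycle_atomPred hn <| (h.and_rank_eq (rank n) fun _ _ => rank_le_of_mem hn).map id
    fun _ _ h => eq_atomPred_of_mem_of_rank_eq h.1 h.2

/-- A set code must not be `{a_p}`, which is already the atom `a_(p+1)`. -/
inductive IsCode (k n : ℕ) : ℕ → Prop
  | atom {x : ℕ} : x < n → IsCode k n x
  | set {x : ℕ} : n ≤ x → (members n x).card ≤ k → (∀ m ∈ members n x, IsCode k n m) →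
      (∀ p < n, members n x ≠ {p}) → IsCode k n x

theorem IsCode.isCode_of_mem (hn : 0 < n) {x m : ℕ} (hx : IsCode k n x)
    (hm : m ∈ members n x) : IsCode k n m := by
  cases hx with
  | atom hx =>
    rw [members_of_lt hx, Finset.mem_singleton] at hm
    exact hm ▸ .atom (atomPred_lt hn x)
  | set _ _ hmem _ => exact hmem m hm

theorem IsCode.card_members_le (hk : 1 ≤ k) {x : ℕ} (hx : IsCode k n x) :
    (members n x).card ≤ k := by
  cases hx with
  | atom hx => simpa [members_of_lt hx] using hk
  | set _ hcard _ _ => exact hcard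

theorem IsCode.eq_of_members_eq (hn : 0 < n) {x y : ℕ} (hx : IsCode k n x) (hy : IsCode k n y)
    (h : members n x = members n y) : x = y := by
  cases hx with
  | atom hx =>
    cases hy with
    | atom hy =>
      rw [members_of_lt hx, members_of_lt hy, Finset.singleton_inj] at h
      exact atomPred_injOn hn hx hy h
    | set _ _ _ hsing =>
      exact absurd (h.symm.trans (members_of_lt hx)) (hsing _ (atomPred_lt hn x))
  | set hx _ _ hsing =>
    cases hy with
    | atom hy => exact absurd (h.trans (members_of_lt hy)) (hsing _ (atomPred_lt hn y))
    | set hy _ _ _ =>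
      rw [members_of_le hx, members_of_le hy] at h
      have := Finset.equivBitIndices.injective h
      omega

theorem exists_isCode_members_eq (hn : 0 < n) {F : Finset ℕ} (hF : ∀ m ∈ F, IsCode k n m)
    (hcard : F.card ≤ k) : ∃ x, IsCode k n x ∧ members n x = F := by
  by_cases hsing : ∃ p < n, F = {p}
  · obtain ⟨p, hp, rfl⟩ := hsing
    exact ⟨(p + 1) % n, .atom (Nat.mod_lt _ hn),
      by rw [members_of_lt (Nat.mod_lt _ hn), atomPred_succ_mod hp]⟩
  · have hmem : members n (n + Finset.equivBitIndices.symm F) = F := by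
      rw [members_of_le (by omega), Nat.add_sub_cancel_left, Equiv.apply_symm_apply]
    refine ⟨_, .set (by omega) ?_ ?_ ?_, hmem⟩ <;> rw [hmem]
    exacts [hcard, hF, fun p hp hFp => hsing ⟨p, hp, hFp⟩]

abbrev Code (k n : ℕ) : Type := {x : ℕ // IsCode k n x}

instance : setLang.Structure (Code k n) where
  funMap f := Empty.elim f
  RelMap
    | .mem, v => (v 0).1 ∈ members n (v 1).1

theorem memRel_code_iff {t x : Code k n} : memRel (Code k n) t x ↔ t.1 ∈ members n x.1 := Iff.rfl

theorem Code.ext_of_memRel (hn : 0 < n) {x y : Code k n}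
    (h : ∀ t, memRel (Code k n) t x ↔ memRel (Code k n) t y) : x = y :=
  Subtype.ext <| x.2.eq_of_members_eq hn y.2 <| Finset.ext fun m =>
    ⟨fun hm => (h ⟨m, x.2.isCode_of_mem hn hm⟩).1 hm,
      fun hm => (h ⟨m, y.2.isCode_of_mem hn hm⟩).2 hm⟩

theorem Code.encard_memRel_le (hk : 1 ≤ k) (x : Code k n) :
    {t | memRel (Code k n) t x}.encard ≤ k :=
  calc {t | memRel (Code k n) t x}.encard
      = (Subtype.val '' {t | memRel (Code k n) t x}).encard :=
        (Subtype.val_injective.encard_image _).symm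
    _ ≤ (members n x.1 : Set ℕ).encard :=
        Set.encard_le_encard (by rintro _ ⟨t, ht, rfl⟩; exact ht)
    _ = (members n x.1).card := Set.encard_coe_eq_coe_finsetCard _
    _ ≤ k := by exact_mod_cast x.2.card_members_le hk

theorem Code.exists_memRel_iff (hn : 0 < n) {s : Set (Code k n)} (hs : s.Finite)
    (hsk : s.ncard ≤ k) : ∃ y, ∀ t, memRel (Code k n) t y ↔ t ∈ s := by
  classical
  obtain ⟨y, hy, hmem⟩ := exists_isCode_members_eq hn (F := hs.toFinset.image Subtype.val)
    (by simp only [Finset.mem_image]; rintro _ ⟨t, -, rfl⟩; exact t.2)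
    (by rwa [Finset.card_image_of_injective _ Subtype.val_injective,
      ← Set.ncard_eq_toFinset_card s hs])
  exact ⟨⟨y, hy⟩, fun t => by simp [memRel_code_iff, hmem, t.2]⟩

theorem Code.not_hasCycle (hn : 0 < n) {i : ℕ} (hi : 1 ≤ i) (hin : i < n) :
    ¬ HasCycle (memRel (Code k n)) i := fun h =>
  have := Nat.le_of_dvd hi (dvd_of_hasCycle_members hn (h.map Subtype.val fun _ _ => id))
  absurd this (by omega)

theorem Code.hasCycle (hn : 0 < n) : HasCycle (memRel (Code k n)) n :=
  ⟨fun j => ⟨j % n, .atom (Nat.mod_lt _ hn)⟩, by simp, fun j hj => by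
    simp [memRel_code_iff, members_of_lt (Nat.mod_lt _ hn), atomPred_succ_mod hj,
      Nat.mod_eq_of_lt hj]⟩

theorem Code.isSkModelBelow (hk : 1 ≤ k) (hn : 0 < n) :
    IsSkModelBelow (memRel (Code k n)) k n :=
  ⟨fun _ _ => Code.ext_of_memRel hn,
    fun x => Set.encard_le_coe_iff_finite_ncard_le.1 (Code.encard_memRel_le hk x),
    fun _ => Code.exists_memRel_iff hn, fun _ => Code.not_hasCycle hn⟩

end CycleCompletion

namespace SkAxioms

open BoundedFormula

def memFormula {m : ℕ} (i j : Fin m) : setLang.BoundedFormula Empty m :=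
  Relations.boundedFormula₂ (memSym.mem : setLang.Relations 2) (&i) (&j)

noncomputable def extSentence : setLang.Sentence :=
  (∀' (memFormula (2 : Fin 3) 0 ⇔ memFormula 2 1) ⟹ &(0 : Fin 2) =' &1).alls

noncomputable def bddSentence (k : ℕ) : setLang.Sentence :=
  (iInf (fun i : Fin (k + 1) => memFormula i.succ 0) ⟹
    iSup (fun p : {p : Fin (k + 1) × Fin (k + 1) // p.1 ≠ p.2} =>
      &p.1.1.succ =' &p.1.2.succ)).alls

noncomputable def setSentence (m : ℕ) : setLang.Sentence :=
  (∃' ∀' (memFormula (Fin.last (m + 1)) (Fin.last m).castSucc ⇔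
    iSup (fun j : Fin m => &(Fin.last (m + 1)) =' &j.castSucc.castSucc))).alls

noncomputable def noCycleSentence (i : ℕ) : setLang.Sentence :=
  (∼((&(Fin.last i) =' &0) ⊓ iInf (fun j : Fin i => memFormula j.castSucc j.succ))).alls

/-- `S_k` with only the acyclicity axioms `C_i` for `i < N`: `noCycleSentence i` is `C_i`, and
`setSentence m` for `m ≤ k` states `V_0` and `V_k`. -/
noncomputable def skTheoryBelow (k N : ℕ) : setLang.Theory :=
  {extSentence, bddSentence k} ∪ setSentence '' Set.Iic k ∪ noCycleSentence '' Set.Ico 1 N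

theorem skTheoryBelow_mono (k : ℕ) : Monotone (skTheoryBelow k) := fun _ _ h =>
  Set.union_subset_union_right _ (Set.image_mono (Set.Ico_subset_Ico_right h))

variable {M : Type*} [setLang.Structure M]

@[simp]
theorem realize_memFormula {m : ℕ} (i j : Fin m) (v : Empty → M) (xs : Fin m → M) :
    (memFormula i j).Realize v xs ↔ memRel M (xs i) (xs j) :=
  realize_rel₂

theorem realize_extSentence :
    M ⊨ extSentence ↔ ∀ x y : M, (∀ t, memRel M t x ↔ memRel M t y) → x = y := by
  simp [Sentence.Realize, extSentence, Fin.snoc, Fin.forall_fin_succ_pi]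

theorem realize_bddSentence {k : ℕ} :
    M ⊨ bddSentence k ↔ ∀ x : M, {t | memRel M t x}.encard ≤ k := by
  simp [Sentence.Realize, bddSentence, Set.encard_le_coe_iff_forall_not_injective,
    Function.Injective, Fin.forall_fin_succ_pi, and_comm]

theorem realize_setSentence {m : ℕ} :
    M ⊨ setSentence m ↔ ∀ f : Fin m → M, ∃ y, ∀ u, memRel M u y ↔ u ∈ Set.range f := by
  simp [Sentence.Realize, setSentence, eq_comm]

theorem realize_noCycleSentence {i : ℕ} : M ⊨ noCycleSentence i ↔ ¬ HasCycle (memRel M) i := by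
  simp [Sentence.Realize, noCycleSentence, hasCycle_iff_exists_fin]

theorem model_skTheoryBelow_iff {k N : ℕ} :
    M ⊨ skTheoryBelow k N ↔ IsSkModelBelow (memRel M) k N := by
  rw [skTheoryBelow, Theory.model_union_iff, Theory.model_union_iff, Theory.model_insert_iff,
    Theory.model_singleton_iff]
  simp only [Theory.model_iff, Set.forall_mem_image, realize_extSentence,
    realize_bddSentence, realize_setSentence, realize_noCycleSentence, IsSkModelBelow,
    Set.encard_le_coe_iff_finite_ncard_le, Set.forall_finite_ncard_le_iff, Set.mem_Iic,
    Set.mem_Ico, and_imp, and_assoc]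

end SkAxioms

theorem FirstOrder.Language.Theory.eventually_models_of_models_iUnion {L : Language.{u, v}}
    {T₀ : L.Theory} (hT₀ : T₀.Finite) {T : ℕ → L.Theory} (hT : Monotone T)
    (h : ∀ (M : Type (max u v)) [L.Structure M] [Nonempty M], M ⊨ ⋃ N, T N → M ⊨ T₀) :
    ∀ᶠ N in Filter.atTop,
      ∀ (M : Type (max u v)) [L.Structure M] [Nonempty M], M ⊨ T N → M ⊨ T₀ := by
  have hψ : ∀ ψ ∈ T₀, ∀ᶠ N in Filter.atTop, T N ⊨ᵇ ψ := by
    intro ψ hψ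
    obtain ⟨Δ, hΔ, hΔψ⟩ := models_iff_finset_models.1 <|
      models_sentence_iff.2 fun M => (h M M.is_model).realize_of_mem ψ hψ
    obtain ⟨N, hN⟩ := hT.directed_le.exists_mem_subset_of_finset_subset_biUnion hΔ
    exact Filter.eventually_atTop.2 ⟨N, fun N' hN' =>
      models_of_models_theory (fun φ hφ => models_sentence_of_mem (hT hN' (hN hφ))) hΔψ⟩
  filter_upwards [(Filter.eventually_all_finite hT₀).2 hψ] with N hN M _ _ hM
  exact (model_iff _).2 fun ψ hψ => (hN ψ hψ).realize_sentence M

open CycleCompletion SkAxioms in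
/-- For every `k ≥ 1` and `n ≥ 1` there is a structure satisfying extensionality,
boundedness by `k`, existence of the empty set and of all sets of `≤ k` elements,
no `∈`-cycles of length `i` for `1 ≤ i < n`, but with an `∈`-cycle of length `n`.
Consequently, the theory `S_k` is not finitely axiomatizable. -/
theorem Sk_not_finitely_axiomatizable (k : ℕ) (hk : 1 ≤ k) :
    (∀ n : ℕ, 1 ≤ n →
      ∃ (A : Type) (r : A → A → Prop),
        (∀ x y : A, (∀ t, r t x ↔ r t y) → x = y) ∧
        (∀ x : A, {t | r t x}.Finite ∧ {t | r t x}.ncard ≤ k) ∧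
        (∀ s : Set A, s.Finite → s.ncard ≤ k → ∃ y : A, ∀ t, r t y ↔ t ∈ s) ∧
        (∀ i : ℕ, 1 ≤ i → i < n → ¬ HasCycle r i) ∧
        HasCycle r n) ∧
    ¬ ∃ T₀ : setLang.Theory, T₀.Finite ∧
        ∀ (M : Type) [setLang.Structure M], Nonempty M →
          (M ⊨ T₀ ↔ IsSkModel (memRel M) k) := by
  refine ⟨fun n hn => ⟨Code k n, memRel (Code k n), ?_⟩, ?_⟩
  · obtain ⟨hext, hbdd, hset, hacyc⟩ := Code.isSkModelBelow hk hn
    exact ⟨hext, hbdd, hset, hacyc, Code.hasCycle hn⟩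
  · rintro ⟨T₀, hT₀, hax⟩
    have hlarge := Theory.eventually_models_of_models_iUnion hT₀ (skTheoryBelow_mono k)
      fun M _ hM hTM => (hax M hM).2 <| isSkModel_iff_forall_isSkModelBelow.2 fun N =>
        model_skTheoryBelow_iff.1 (hTM.mono (Set.subset_iUnion _ N))
    obtain ⟨n, hT₀n, hn⟩ := (hlarge.and (Filter.eventually_ge_atTop 1)).exists
    have hne : Nonempty (Code k n) := ⟨⟨0, .atom hn⟩⟩
    have hSk := (hax _ hne).1 <| hT₀n _ <| model_skTheoryBelow_iff.2 (Code.isSkModelBelow hk hn)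
    exact (isSkModel_iff_forall_isSkModelBelow.1 hSk (n + 1)).2.2.2 n hn n.lt_succ_self
      (Code.hasCycle hn)
end

section
/- Over models satisfying boundedness by k (every element has at most k members), the ZF-style foundation axiom (every nonempty x has an element y disjoint from x) is equivalent to the conjunction of the acyclicity axioms C_n for 1 ≤ n ≤ k, where C_n forbids ∈-cycles of length n. -/
/-- Over models satisfying extensionality, boundedness by `k` (every element has at
most `k` members), and existence of all sets of at most `k` elements, the ZF-style
foundation axiom (every nonempty `x` has an element `y` disjoint from `x`) is
equivalent to the conjunction of the acyclicity axioms `C_n` for `1 ≤ n ≤ k`. -/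
theorem foundation_iff_bounded_acyclicity {A : Type*} (r : A → A → Prop) (k : ℕ)
    (hext : ∀ x y : A, (∀ t, r t x ↔ r t y) → x = y)
    (hbound : ∀ x : A, {t | r t x}.Finite ∧ {t | r t x}.ncard ≤ k)
    (hcomp : ∀ s : Set A, s.Finite → s.ncard ≤ k → ∃ y : A, ∀ t, r t y ↔ t ∈ s) :
    (∀ x : A, {t | r t x}.Nonempty → ∃ y, r y x ∧ ∀ z, ¬ (r z x ∧ r z y)) ↔
      (∀ n : ℕ, 1 ≤ n → n ≤ k → ¬ HasCycle r n) := by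
  classical
  constructor
  · rintro hF n hn1 hnk ⟨x, hx0, hxr⟩
    set s : Set A := ↑((Finset.range n).image x) with hs
    have hsfin : s.Finite := ((Finset.range n).image x).finite_toSet
    have hscard : s.ncard ≤ k := by
      rw [hs, Set.ncard_coe_finset]
      exact le_trans (Finset.card_image_le.trans (by simp)) hnk
    obtain ⟨y, hy⟩ := hcomp s hsfin hscard
    have hmem : ∀ j, j < n → r (x j) y := by
      intro j hj
      refine (hy _).2 ?_
      simp only [hs, Finset.coe_image, Set.mem_image, Finset.mem_coe, Finset.mem_range]
      exact ⟨j, hj, rfl⟩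
    obtain ⟨z, hzy, hzdisj⟩ := hF y ⟨x 0, hmem 0 hn1⟩
    obtain ⟨j, hj, hjz⟩ : ∃ j, j < n ∧ x j = z := by
      have h := (hy z).1 hzy
      simp only [hs, Finset.coe_image, Set.mem_image, Finset.mem_coe, Finset.mem_range] at h
      exact h
    rcases Nat.eq_zero_or_pos j with hj0 | hjpos
    · have h1 : r (x (n - 1)) z := by
        have h := hxr (n - 1) (by omega)
        rw [show n - 1 + 1 = n by omega, hx0] at h
        rwa [← hjz, hj0]
      exact hzdisj (x (n - 1)) ⟨hmem _ (by omega), h1⟩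
    · have h1 : r (x (j - 1)) z := by
        have h := hxr (j - 1) (by omega)
        rw [show j - 1 + 1 = j by omega] at h
        rwa [hjz] at h
      exact hzdisj (x (j - 1)) ⟨hmem _ (by omega), h1⟩
  · intro hC x hx
    by_contra hcon
    push_neg at hcon
    have hstep : ∀ y : {t | r t x}, ∃ z : {t | r t x}, r (z : A) (y : A) := by
      rintro ⟨y, hy⟩
      obtain ⟨z, hz1, hz2⟩ := hcon y hy
      exact ⟨⟨z, hz1⟩, hz2⟩
    choose g hg using hstep
    obtain ⟨y0, hy0⟩ := hx
    set seq : ℕ → {t | r t x} := fun m => g^[m] ⟨y0, hy0⟩ with hseq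
    have hseqr : ∀ m : ℕ, r (seq (m + 1) : A) (seq m : A) := by
      intro m
      have : seq (m + 1) = g (seq m) := Function.iterate_succ_apply' g m _
      rw [this]
      exact hg (seq m)
    haveI : Fintype {t | r t x} := (hbound x).1.fintype
    have hcard : Fintype.card {t | r t x} < Fintype.card (Fin (k + 1)) := by
      have h1 : {t | r t x}.ncard = Fintype.card {t | r t x} := by
        rw [Set.ncard_eq_toFinset_card', Set.toFinset_card]
      have hk := (hbound x).2
      simp only [Fintype.card_fin]
      omega
    obtain ⟨a, b, hab, heq⟩ := Fintype.exists_ne_map_eq_of_card_lt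
      (fun m : Fin (k + 1) => seq (m : ℕ)) hcard
    have habv : (a : ℕ) ≠ (b : ℕ) := fun h => hab (Fin.ext h)
    have key : ∀ i j : ℕ, i < j → j ≤ k → seq i = seq j → False := by
      intro i j hij hjk hseqeq
      refine hC (j - i) (by omega) (by omega) ⟨fun m => (seq (j - m) : A), ?_, ?_⟩
      · show (seq (j - (j - i)) : A) = (seq (j - 0) : A)
        rw [show j - (j - i) = i by omega, Nat.sub_zero]
        exact congrArg _ hseqeq
      · intro m hm
        show r (seq (j - m) : A) (seq (j - (m + 1)) : A)
        have h := hseqr (j - m - 1)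
        rw [show j - m - 1 + 1 = j - m by omega] at h
        rw [show j - (m + 1) = j - m - 1 from by omega]
        exact h
    rcases lt_or_gt_of_ne habv with hlt | hlt
    · exact key a b hlt (by omega) heq
    · exact key b a hlt (by omega) heq.symm
end
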